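/- The Ribe function F₀ is homogeneous: F₀(r x) = r F₀(x) for all r ∈ ℝ and all finitely supported real sequences x. -/

import Mathlib

/-!
Since `Real.log |t| = Real.log t`, the Ribe function is `η(∑ xᵢ) - ∑ η(xᵢ)` with `η = negMulLog`.
The identity `η(r t) = t η(r) + r η(t)` turns both terms of `ribe (r • x)` into `r` times the
corresponding term of `ribe x` plus the same multiple `(∑ xᵢ) η(r)`, which cancels.
-/

/-- The Ribe function on finitely supported real sequences,
with the convention `0 * log 0 = 0` (note `Real.log 0 = 0`). -/
noncomputable def ribe (x : ℕ →₀ ℝ) : ℝ :=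
  (∑ i ∈ x.support, x i * Real.log |x i|) -
    (∑ i ∈ x.support, x i) * Real.log |∑ i ∈ x.support, x i|

open Real

theorem ribe_eq_negMulLog_sum_sub_sum_negMulLog (x : ℕ →₀ ℝ) :
    ribe x = negMulLog (x.sum fun _ t => t) - x.sum fun _ t => negMulLog t := by
  simp only [ribe, Finsupp.sum, negMulLog, log_abs, neg_mul, Finset.sum_neg_distrib]
  ring

theorem Finsupp.sum_smul_eq_mul_sum {α : Type*} (r : ℝ) (x : α →₀ ℝ) :
    ((r • x).sum fun _ t => t) = r * x.sum fun _ t => t := by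
  rw [Finsupp.sum_smul_index fun _ => rfl, Finsupp.mul_sum]

theorem Finsupp.sum_negMulLog_smul {α : Type*} (r : ℝ) (x : α →₀ ℝ) :
    ((r • x).sum fun _ t => negMulLog t) =
      (x.sum fun _ t => t) * negMulLog r + r * x.sum fun _ t => negMulLog t := by
  rw [Finsupp.sum_smul_index fun _ => negMulLog_zero, Finsupp.sum_mul, Finsupp.mul_sum,
    ← Finsupp.sum_add]
  simp only [negMulLog_mul]

theorem ribe_homogeneous (r : ℝ) (x : ℕ →₀ ℝ) : ribe (r • x) = r * ribe x := by
  simp only [ribe_eq_negMulLog_sum_sub_sum_negMulLog, Finsupp.sum_smul_eq_mul_sum,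
    Finsupp.sum_negMulLog_smul, negMulLog_mul]
  ring
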